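/- One-step expected descent for SGD-PLRS: if f : ℝ^d → ℝ is β-smooth and x' = x − (η_c + u) g, then E[f(x')] − f(x) ≤ −‖∇f(x)‖² (η_c − (2/3) β η_c²) + (2/3) β η_c² σ². -/

import Mathlib

/-! Smoothness gives the two-sided quadratic bound
`|f (x - s • g) - (f x - s ⟪∇f x, g⟫)| ≤ (β/2) s² ‖g‖²`; its upper half is the descent inequality
and the two halves together make `f (x - s • g)` integrable. Taking expectations, independence of
the step `s = ηc + u` from `g` turns the right-hand side into
`f x - E[s] ‖∇f x‖² + (β/2) E[s²] E‖g‖²`, where `E‖g‖² = ‖∇f x‖² + E‖g - ∇f x‖²`.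
Finally `s` is uniform on `[Lmin, Lmax]`, so `E[s] = ηc` and
`E[s²] = (Lmin² + Lmin Lmax + Lmax²)/3 ≤ (Lmin + Lmax)²/3 = (4/3) ηc²` because `Lmin Lmax ≥ 0`. -/

open MeasureTheory ProbabilityTheory
open scoped RealInnerProductSpace

section GradientLipschitz

variable {E : Type*} [NormedAddCommGroup E] [InnerProductSpace ℝ E] [CompleteSpace E]

theorem hasDerivAt_comp_add_smul_gradient {f : E → ℝ} (hf : Differentiable ℝ f) (x v : E)
    (t : ℝ) : HasDerivAt (fun t : ℝ => f (x + t • v)) ⟪gradient f (x + t • v), v⟫ t := by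
  have hline : HasDerivAt (fun t : ℝ => x + t • v) v t := by
    simpa using ((hasDerivAt_id t).smul_const v).const_add x
  simpa [Function.comp_def] using
    (hf (x + t • v)).hasGradientAt.hasFDerivAt.comp_hasDerivAt t hline

theorem abs_sub_sub_inner_gradient_le {f : E → ℝ} {β : ℝ} (hf : Differentiable ℝ f) {x : E}
    (hsmooth : ∀ a, ‖gradient f a - gradient f x‖ ≤ β * ‖a - x‖) (y : E) :
    |f y - f x - ⟪gradient f x, y - x⟫| ≤ β / 2 * ‖y - x‖ ^ 2 := by
  set v := y - x
  have hφ : ∀ t : ℝ, HasDerivAt (fun t : ℝ => f (x + t • v) - f x - t * ⟪gradient f x, v⟫)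
      ⟪gradient f (x + t • v) - gradient f x, v⟫ t := fun t => by
    rw [inner_sub_left]
    simpa using ((hasDerivAt_comp_add_smul_gradient hf x v t).sub_const (f x)).fun_sub
      ((hasDerivAt_id t).mul_const ⟪gradient f x, v⟫)
  have hB : ∀ t : ℝ, HasDerivAt (fun t : ℝ => β / 2 * ‖v‖ ^ 2 * t ^ 2) (β * ‖v‖ ^ 2 * t) t :=
    fun t => ((hasDerivAt_pow 2 t).const_mul (β / 2 * ‖v‖ ^ 2)).congr_deriv (by norm_num; ring)
  have hbound : ∀ t ∈ Set.Ico (0 : ℝ) 1,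
      ‖⟪gradient f (x + t • v) - gradient f x, v⟫‖ ≤ β * ‖v‖ ^ 2 * t := fun t ht =>
    calc ‖⟪gradient f (x + t • v) - gradient f x, v⟫‖
        ≤ ‖gradient f (x + t • v) - gradient f x‖ * ‖v‖ := norm_inner_le_norm _ _
      _ ≤ β * ‖x + t • v - x‖ * ‖v‖ := by gcongr; exact hsmooth _
      _ = β * ‖v‖ ^ 2 * t := by
        rw [add_sub_cancel_left, norm_smul, Real.norm_of_nonneg ht.1]; ring
  simpa [v] using image_norm_le_of_norm_deriv_right_le_deriv_boundary
    (fun t _ => (hφ t).continuousAt.continuousWithinAt) (fun t _ => (hφ t).hasDerivWithinAt)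
    (by simp) hB hbound (Set.right_mem_Icc.2 zero_le_one)

end GradientLipschitz

namespace MeasureTheory.pdf.IsUniform

variable {Ω : Type*} [MeasurableSpace Ω] {μ : Measure Ω} {u : Ω → ℝ} {a b : ℝ}

theorem aemeasurable_of_Icc (hab : a < b) (hu : IsUniform u (Set.Icc a b) μ) :
    AEMeasurable u μ :=
  hu.aemeasurable (by simp [hab]) measure_Icc_lt_top.ne

theorem ae_mem_Icc (hab : a < b) (hu : IsUniform u (Set.Icc a b) μ) :
    ∀ᵐ ω ∂μ, u ω ∈ Set.Icc a b := by
  refine ae_of_ae_map (hu.aemeasurable_of_Icc hab) ?_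
  rw [hu, ProbabilityTheory.cond]
  exact Measure.ae_smul_measure (ae_restrict_mem measurableSet_Icc) _

theorem integral_comp_Icc (hab : a < b) (hu : IsUniform u (Set.Icc a b) μ) {h : ℝ → ℝ}
    (hh : Measurable h) : ∫ ω, h (u ω) ∂μ = (∫ t in a..b, h t) / (b - a) := by
  rw [← integral_map (hu.aemeasurable_of_Icc hab) hh.aestronglyMeasurable, hu,
    ProbabilityTheory.cond, integral_smul_measure, intervalIntegral.integral_of_le hab.le,
    integral_Icc_eq_integral_Ioc, Real.volume_Icc, ENNReal.toReal_inv,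
    ENNReal.toReal_ofReal (sub_nonneg.2 hab.le), smul_eq_mul, inv_mul_eq_div]

theorem integral_comp_const_add (hab : a < b) (hu : IsUniform u (Set.Icc a b) μ) {h : ℝ → ℝ}
    (hh : Measurable h) (c : ℝ) :
    ∫ ω, h (c + u ω) ∂μ = (∫ t in c + a..c + b, h t) / (b - a) := by
  rw [hu.integral_comp_Icc hab (h := fun t => h (c + t)) (hh.comp (measurable_const_add c)),
    ← intervalIntegral.integral_comp_add_left]

theorem integral_const_add (hab : a < b) (hu : IsUniform u (Set.Icc a b) μ) (c : ℝ) :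
    ∫ ω, (c + u ω) ∂μ = c + (a + b) / 2 := by
  rw [hu.integral_comp_const_add hab (h := fun t => t) measurable_id, integral_id]
  field_simp [(sub_pos.2 hab).ne']
  ring

theorem integral_const_add_sq (hab : a < b) (hu : IsUniform u (Set.Icc a b) μ) (c : ℝ) :
    ∫ ω, (c + u ω) ^ 2 ∂μ = ((c + a) ^ 2 + (c + a) * (c + b) + (c + b) ^ 2) / 3 := by
  rw [hu.integral_comp_const_add hab (h := fun t => t ^ 2) (measurable_id.pow_const 2),
    integral_pow]
  field_simp [(sub_pos.2 hab).ne']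
  ring

theorem integral_const_add_sq_le (hab : a < b) (hu : IsUniform u (Set.Icc a b) μ) {c : ℝ}
    (hca : 0 ≤ c + a) : ∫ ω, (c + u ω) ^ 2 ∂μ ≤ 4 / 3 * (c + (a + b) / 2) ^ 2 := by
  rw [hu.integral_const_add_sq hab]
  nlinarith [mul_nonneg hca (hca.trans (by linarith : c + a ≤ c + b))]

end MeasureTheory.pdf.IsUniform

section Expectation

variable {Ω : Type*} [MeasurableSpace Ω] {μ : Measure Ω}

theorem integral_le_add_of_abs_sub_le {F A B : Ω → ℝ} (hF : AEStronglyMeasurable F μ)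
    (hA : Integrable A μ) (hB : Integrable B μ) (h : ∀ᵐ ω ∂μ, |F ω - A ω| ≤ B ω) :
    ∫ ω, F ω ∂μ ≤ ∫ ω, A ω ∂μ + ∫ ω, B ω ∂μ := by
  have hF_int : Integrable F μ := by
    refine (hA.norm.add hB).mono' hF (h.mono fun ω hω => ?_)
    have := abs_sub_abs_le_abs_sub (F ω) (A ω)
    simp only [Pi.add_apply, Real.norm_eq_abs]
    linarith
  rw [← integral_add hA hB]
  exact integral_mono_ae hF_int (hA.add hB)
    (h.mono fun ω hω => by linarith [le_abs_self (F ω - A ω)])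

variable {E : Type*} [NormedAddCommGroup E] [InnerProductSpace ℝ E] [CompleteSpace E]

theorem integral_norm_sq_eq_norm_integral_sq_add [IsProbabilityMeasure μ] {g : Ω → E}
    (hg : Integrable g μ) (hg2 : Integrable (fun ω => ‖g ω‖ ^ 2) μ) :
    ∫ ω, ‖g ω‖ ^ 2 ∂μ = ‖∫ ω, g ω ∂μ‖ ^ 2 + ∫ ω, ‖g ω - ∫ ω', g ω' ∂μ‖ ^ 2 ∂μ := by
  set G := ∫ ω, g ω ∂μ
  have hinner : Integrable (fun ω => ⟪G, g ω⟫) μ := hg.const_inner G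
  have hexpand : ∀ ω, ‖g ω - G‖ ^ 2 = ‖g ω‖ ^ 2 - 2 * ⟪G, g ω⟫ + ‖G‖ ^ 2 :=
    fun ω => by rw [norm_sub_sq_real, real_inner_comm]
  simp_rw [hexpand]
  rw [integral_add (f := fun ω => ‖g ω‖ ^ 2 - 2 * ⟪G, g ω⟫) (hg2.sub (hinner.const_mul 2))
      (integrable_const _),
    integral_sub hg2 (hinner.const_mul 2), integral_const_mul, integral_inner hg,
    real_inner_self_eq_norm_sq, integral_const, probReal_univ, one_smul]
  ring

variable [MeasurableSpace E] [BorelSpace E]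

theorem integral_comp_sub_smul_le_of_gradient_lipschitz [IsProbabilityMeasure μ] {f : E → ℝ}
    {β C : ℝ} (hf : Differentiable ℝ f) {x : E}
    (hsmooth : ∀ a, ‖gradient f a - gradient f x‖ ≤ β * ‖a - x‖)
    {s : Ω → ℝ} {g : Ω → E} (hs : AEMeasurable s μ) (hs_bdd : ∀ᵐ ω ∂μ, |s ω| ≤ C)
    (hindep : IndepFun s g μ) (hg : Integrable g μ)
    (hg2 : Integrable (fun ω => ‖g ω‖ ^ 2) μ) :
    ∫ ω, f (x - s ω • g ω) ∂μ ≤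
      f x - (∫ ω, s ω ∂μ) * ⟪gradient f x, ∫ ω, g ω ∂μ⟫
        + β / 2 * ((∫ ω, s ω ^ 2 ∂μ) * ∫ ω, ‖g ω‖ ^ 2 ∂μ) := by
  set G := gradient f x
  have hsg : Integrable (fun ω => s ω * ⟪G, g ω⟫) μ :=
    (hg.const_inner G).bdd_mul hs.aestronglyMeasurable hs_bdd
  have hs2g2 : Integrable (fun ω => s ω ^ 2 * ‖g ω‖ ^ 2) μ :=
    hg2.bdd_mul (hs.pow_const 2).aestronglyMeasurable (hs_bdd.mono fun ω hω => by
      simpa [sq_abs] using pow_le_pow_left₀ (abs_nonneg _) hω 2)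
  have hpointwise : ∀ ω, |f (x - s ω • g ω) - (f x - s ω * ⟪G, g ω⟫)|
      ≤ β / 2 * (s ω ^ 2 * ‖g ω‖ ^ 2) := fun ω => by
    have := abs_sub_sub_inner_gradient_le hf hsmooth (x - s ω • g ω)
    rwa [sub_sub_cancel_left, inner_neg_right, real_inner_smul_right, norm_neg, norm_smul,
      mul_pow, Real.norm_eq_abs, sq_abs, sub_neg_eq_add, sub_add] at this
  have hmeas : AEStronglyMeasurable (fun ω => f (x - s ω • g ω)) μ :=
    hf.continuous.comp_aestronglyMeasurable
      (aestronglyMeasurable_const.sub (hs.aestronglyMeasurable.smul hg.1))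
  have hindep₁ : IndepFun s (fun ω => ⟪G, g ω⟫) μ :=
    hindep.comp measurable_id (continuous_const.inner continuous_id).measurable
  have hindep₂ : IndepFun (fun ω => s ω ^ 2) (fun ω => ‖g ω‖ ^ 2) μ :=
    hindep.comp (measurable_id.pow_const 2) (measurable_norm.pow_const 2)
  calc ∫ ω, f (x - s ω • g ω) ∂μ
      ≤ ∫ ω, (f x - s ω * ⟪G, g ω⟫) ∂μ + ∫ ω, β / 2 * (s ω ^ 2 * ‖g ω‖ ^ 2) ∂μ :=
        integral_le_add_of_abs_sub_le hmeas ((integrable_const _).sub hsg)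
          (hs2g2.const_mul _) (ae_of_all _ hpointwise)
    _ = _ := by
        rw [integral_sub (integrable_const _) hsg, integral_const_mul, integral_const,
          probReal_univ, one_smul,
          hindep₁.integral_fun_mul_eq_mul_integral hs.aestronglyMeasurable (hg.const_inner G).1,
          hindep₂.integral_fun_mul_eq_mul_integral (hs.pow_const 2).aestronglyMeasurable hg2.1,
          integral_inner hg]

end Expectation

theorem sgd_plrs_one_step_descent_general
    {Ω : Type} [MeasurableSpace Ω] (μ : Measure Ω) [IsProbabilityMeasure μ]
    {d : ℕ} (f : EuclideanSpace ℝ (Fin d) → ℝ) (β σ : ℝ) (hβ : 0 ≤ β)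
    (hdiff : Differentiable ℝ f)
    (hsmooth : ∀ a b : EuclideanSpace ℝ (Fin d),
      ‖gradient f a - gradient f b‖ ≤ β * ‖a - b‖)
    (x : EuclideanSpace ℝ (Fin d))
    (Lmin Lmax ηc : ℝ)
    (hLmin : 0 < Lmin) (hLL : Lmin < Lmax)
    (hηc : ηc = (Lmin + Lmax) / 2)
    (u : Ω → ℝ) (g : Ω → EuclideanSpace ℝ (Fin d))
    (hu : pdf.IsUniform u (Set.Icc (Lmin - ηc) (Lmax - ηc)) μ volume)
    (hindep : IndepFun u g μ)
    (hg_int : Integrable g μ)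
    (hg2_int : Integrable (fun ω => ‖g ω‖ ^ 2) μ)
    (hg_mean : ∫ ω, g ω ∂μ = gradient f x)
    (hσ : ∫ ω, ‖g ω - gradient f x‖ ^ 2 ∂μ ≤ σ ^ 2)
    (x' : Ω → EuclideanSpace ℝ (Fin d))
    (hx' : ∀ ω, x' ω = x - (ηc + u ω) • g ω) :
    ∫ ω, f (x' ω) ∂μ - f x ≤
      -‖gradient f x‖ ^ 2 * (ηc - (2 / 3) * β * ηc ^ 2) + (2 / 3) * β * ηc ^ 2 * σ ^ 2 := by
  have hab : Lmin - ηc < Lmax - ηc := by linarith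
  have hmid : ηc + (Lmin - ηc + (Lmax - ηc)) / 2 = ηc := by rw [hηc]; ring
  have hs_mean : ∫ ω, (ηc + u ω) ∂μ = ηc := by rw [hu.integral_const_add hab, hmid]
  have hs_sq : ∫ ω, (ηc + u ω) ^ 2 ∂μ ≤ 4 / 3 * ηc ^ 2 := by
    simpa only [hmid] using hu.integral_const_add_sq_le hab (by linarith : 0 ≤ ηc + (Lmin - ηc))
  have hs_bdd : ∀ᵐ ω ∂μ, |ηc + u ω| ≤ Lmax := (hu.ae_mem_Icc hab).mono fun ω hω =>
    abs_le.2 ⟨by linarith [hω.1], by linarith [hω.2]⟩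
  have hs_indep : IndepFun (fun ω => ηc + u ω) g μ :=
    hindep.comp (measurable_const_add ηc) measurable_id
  have hdescent := integral_comp_sub_smul_le_of_gradient_lipschitz hdiff (fun a => hsmooth a x)
    ((hu.aemeasurable_of_Icc hab).const_add ηc) hs_bdd hs_indep hg_int hg2_int
  rw [hs_mean, hg_mean, real_inner_self_eq_norm_sq,
    integral_norm_sq_eq_norm_integral_sq_add hg_int hg2_int, hg_mean] at hdescent
  simp_rw [hx']
  have hpenalty : β / 2 * ((∫ ω, (ηc + u ω) ^ 2 ∂μ) *
        (‖gradient f x‖ ^ 2 + ∫ ω, ‖g ω - gradient f x‖ ^ 2 ∂μ))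
      ≤ β / 2 * (4 / 3 * ηc ^ 2 * (‖gradient f x‖ ^ 2 + σ ^ 2)) := by
    gcongr
  linarith

/-- **One-step expected descent for SGD-PLRS.** If `f` is `β`-smooth and
`x' = x - (ηc + u) • g` with `ηc = (Lmin + Lmax)/2`, `u` uniform on `[Lmin - ηc, Lmax - ηc]`,
and `g` a stochastic gradient at `x` independent of `u` with mean `∇f(x)` and
`E[‖g - ∇f(x)‖²] ≤ σ²`, then
`E[f(x')] - f(x) ≤ -‖∇f(x)‖² (ηc - (2/3) β ηc²) + (2/3) β ηc² σ²`. -/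
theorem sgd_plrs_one_step_descent
    {Ω : Type} [MeasurableSpace Ω] (μ : Measure Ω) [IsProbabilityMeasure μ]
    {d : ℕ} (f : EuclideanSpace ℝ (Fin d) → ℝ) (β σ : ℝ) (hβ : 0 ≤ β)
    (hdiff : Differentiable ℝ f)
    (hsmooth : ∀ a b : EuclideanSpace ℝ (Fin d),
      ‖gradient f a - gradient f b‖ ≤ β * ‖a - b‖)
    (x : EuclideanSpace ℝ (Fin d))
    (Lmin Lmax ηc : ℝ)
    (hLmin : 0 < Lmin) (hLL : Lmin < Lmax) (hLmax : Lmax < 1)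
    (hηc : ηc = (Lmin + Lmax) / 2)
    (u : Ω → ℝ) (g : Ω → EuclideanSpace ℝ (Fin d))
    (hu : pdf.IsUniform u (Set.Icc (Lmin - ηc) (Lmax - ηc)) μ volume)
    (hindep : IndepFun u g μ)
    (hg_int : Integrable g μ)
    (hg2_int : Integrable (fun ω => ‖g ω‖ ^ 2) μ)
    (hg_mean : ∫ ω, g ω ∂μ = gradient f x)
    (hσ : ∫ ω, ‖g ω - gradient f x‖ ^ 2 ∂μ ≤ σ ^ 2)
    (x' : Ω → EuclideanSpace ℝ (Fin d))
    (hx' : ∀ ω, x' ω = x - (ηc + u ω) • g ω) :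
    ∫ ω, f (x' ω) ∂μ - f x ≤
      -‖gradient f x‖ ^ 2 * (ηc - (2 / 3) * β * ηc ^ 2) + (2 / 3) * β * ηc ^ 2 * σ ^ 2 :=
  sgd_plrs_one_step_descent_general μ f β σ hβ hdiff hsmooth x Lmin Lmax ηc hLmin hLL hηc u g hu
    hindep hg_int hg2_int hg_mean hσ x' hx'
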